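/- arXiv:1605.03034 — 3 statements merged into one kernel-verified Lean document; each statement's English description precedes it below -/
import Mathlib

section
/- Let A be a c.e. set and let X₀, X₁ be disjoint c.e. sets with A ⊆ X₀ ∪ X₁ such that neither X₀ \ A nor X₁ \ A is c.e. Then X₀ ∩ A, X₁ ∩ A is a split of A that is non-trivial (neither X₀ ∩ A nor X₁ ∩ A is computable) and not a Friedberg split: X₀ \ A is not c.e. but X₀ \ (X₁ ∩ A) = X₀ is c.e. -/
/-- A set of naturals is computably enumerable (c.e.) if its membership
predicate is recursively enumerable. -/
def Ce (A : Set ℕ) : Prop := REPred (· ∈ A)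

/-- A set of naturals is computable if its membership predicate is computable. -/
def CompSet (A : Set ℕ) : Prop := ComputablePred (· ∈ A)

/-- `A₀, A₁` is a split of the c.e. set `A`: a pair of disjoint c.e. sets
whose union is `A`. -/
def IsSplit (A A₀ A₁ : Set ℕ) : Prop :=
  Ce A₀ ∧ Ce A₁ ∧ Disjoint A₀ A₁ ∧ A₀ ∪ A₁ = A

/-- A split `A₀, A₁` of `A` is a Friedberg split if for every c.e. set `W`,
if `W \\ A` is not c.e. then neither `W \\ A₀` nor `W \\ A₁` is c.e. -/
def FriedbergSplit (A A₀ A₁ : Set ℕ) : Prop :=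
  IsSplit A A₀ A₁ ∧
    ∀ W : Set ℕ, Ce W → ¬ Ce (W \ A) → ¬ Ce (W \ A₀) ∧ ¬ Ce (W \ A₁)

lemma rePred_and {p q : ℕ → Prop} (hp : REPred p) (hq : REPred q) :
    REPred fun a => p a ∧ q a := by
  have h : Partrec fun a : ℕ =>
      (Part.assert (p a) fun _ => Part.some ()).bind fun _ =>
        Part.assert (q a) fun _ => Part.some () :=
    hp.bind ((hq.comp Computable.fst).to₂)
  refine h.of_eq fun a => Part.ext fun u => ?_
  simp [Part.mem_assert_iff, and_assoc]

lemma ce_inter {X Y : Set ℕ} (hX : Ce X) (hY : Ce Y) : Ce (X ∩ Y) :=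
  rePred_and hX hY

lemma ce_diff_of_comp {X Y : Set ℕ} (hX : Ce X) (hY : CompSet Y) : Ce (X \ Y) := by
  have h : Ce Yᶜ := by
    have := (ComputablePred.not hY).to_re
    exact this
  exact (ce_inter hX h).of_eq fun a => Iff.rfl

/-- If disjoint c.e. sets `X₀, X₁` cover the c.e. set `A` and neither
`X₀ \\ A` nor `X₁ \\ A` is c.e., then `X₀ ∩ A, X₁ ∩ A` is a non-trivial
non-Friedberg split of `A`. -/
theorem split_from_cover (A X₀ X₁ : Set ℕ)
    (hA : Ce A) (hX₀ : Ce X₀) (hX₁ : Ce X₁)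
    (hdisj : Disjoint X₀ X₁) (hcover : A ⊆ X₀ ∪ X₁)
    (h0 : ¬ Ce (X₀ \ A)) (h1 : ¬ Ce (X₁ \ A)) :
    IsSplit A (X₀ ∩ A) (X₁ ∩ A) ∧
    (¬ CompSet (X₀ ∩ A) ∧ ¬ CompSet (X₁ ∩ A)) ∧
    ¬ Ce (X₀ \ A) ∧ X₀ \ (X₁ ∩ A) = X₀ ∧ Ce (X₀ \ (X₁ ∩ A)) ∧
    ¬ FriedbergSplit A (X₀ ∩ A) (X₁ ∩ A) := by
  have hdisj' : Disjoint (X₀ ∩ A) (X₁ ∩ A) :=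
    hdisj.mono Set.inter_subset_left Set.inter_subset_left
  have hunion : (X₀ ∩ A) ∪ (X₁ ∩ A) = A := by
    rw [← Set.union_inter_distrib_right]
    exact Set.inter_eq_right.mpr hcover
  have hsplit : IsSplit A (X₀ ∩ A) (X₁ ∩ A) :=
    ⟨ce_inter hX₀ hA, ce_inter hX₁ hA, hdisj', hunion⟩
  have hdiff0 : X₀ \ (X₀ ∩ A) = X₀ \ A := by
    ext x; simp [Set.mem_diff]
  have hdiff1 : X₁ \ (X₁ ∩ A) = X₁ \ A := by
    ext x; simp [Set.mem_diff]
  have heq : X₀ \ (X₁ ∩ A) = X₀ := by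
    ext x
    simp only [Set.mem_diff, Set.mem_inter_iff, and_iff_left_iff_imp]
    intro hx ⟨hx1, _⟩
    exact hdisj.ne_of_mem hx hx1 rfl
  refine ⟨hsplit, ⟨?_, ?_⟩, h0, heq, by rw [heq]; exact hX₀, ?_⟩
  · intro hc
    exact h0 (hdiff0 ▸ ce_diff_of_comp hX₀ hc)
  · intro hc
    exact h1 (hdiff1 ▸ ce_diff_of_comp hX₁ hc)
  · intro ⟨_, hF⟩
    exact (hF X₀ hX₀ h0).2 (by rw [heq]; exact hX₀)
end

section
/- There exist a splitting procedure h, a c.e. set A possessing a non-trivial non-Friedberg split, and an infinite computable set I ⊆ ℕ such that W_e = A for every e ∈ I, and for every e ∈ I the split W_{e₀}, W_{e₁} given by h(e) = (e₀, e₁) is a non-trivial non-Friedberg split of A (neither W_{e₀} nor W_{e₁} is computable, and there is a c.e. W with W \ A not c.e. but W \ W_{e₀} or W \ W_{e₁} c.e.). -/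
/-- The standard numbering of the c.e. sets: `We e` is the domain of the
`e`-th partial computable function. -/
def We (e : ℕ) : Set ℕ := {x | ((Denumerable.ofNat Nat.Partrec.Code e).eval x).Dom}

/-- A splitting procedure: a total computable `h : ℕ → ℕ × ℕ` such that for
every `e`, `W (h e).1, W (h e).2` is a split of `W e`, non-trivial whenever
`W e` is not computable. -/
def SplittingProcedure (h : ℕ → ℕ × ℕ) : Prop :=
  Computable h ∧ ∀ e : ℕ,
    Disjoint (We (h e).1) (We (h e).2) ∧
    We (h e).1 ∪ We (h e).2 = We e ∧
    (¬ CompSet (We e) → ¬ CompSet (We (h e).1) ∧ ¬ CompSet (We (h e).2))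


open Nat.Partrec (Code)
open Nat.Partrec.Code
namespace FSplit

def WsB (k s x : ℕ) : Bool := (evaln s (Denumerable.ofNat Code k) x).isSome
theorem wsb_mono {k s t x : ℕ} (h : WsB k s x = true) (hst : s ≤ t) : WsB k t x = true := by
  unfold WsB at *
  rw [Option.isSome_iff_exists] at *
  obtain ⟨a, ha⟩ := h
  exact ⟨a, evaln_mono hst ha⟩
def We' (e : ℕ) : Set ℕ := {x | ((Denumerable.ofNat Code e).eval x).Dom}
theorem mem_We_iff {k x : ℕ} : x ∈ We' k ↔ ∃ s, WsB k s x = true := by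
  constructor
  · intro h
    obtain ⟨a, ha⟩ := Part.dom_iff_mem.1 h
    obtain ⟨s, hs⟩ := evaln_complete.1 ha
    exact ⟨s, Option.isSome_iff_exists.2 ⟨a, hs⟩⟩
  · rintro ⟨s, hs⟩
    obtain ⟨a, ha⟩ := Option.isSome_iff_exists.1 hs
    exact Part.dom_iff_mem.2 ⟨a, evaln_complete.2 ⟨s, ha⟩⟩
theorem wsb_zero (k x : ℕ) : WsB k 0 x = false := by
  unfold WsB; rw [evaln]; rfl
def scanL (p : ℕ → Bool) : ℕ → Option ℕ
  | 0 => none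
  | n + 1 => (scanL p n) <|> (bif p n then some n else none)
theorem scanL_none {p : ℕ → Bool} {k : ℕ} (h : scanL p k = none) : ∀ j < k, p j = false := by
  induction k with
  | zero => intro j hj; omega
  | succ k ih =>
    rw [scanL] at h
    rcases hh : scanL p k with _ | m
    · rw [hh] at h
      simp only [Option.orElse_eq_orElse, Option.orElse_none] at h
      intro j hj
      rcases Nat.lt_succ_iff_lt_or_eq.1 hj with hj | rfl
      · exact ih hh j hj
      · cases hp : p j
        · rfl
        · rw [hp] at h; simp at h
    · rw [hh] at h; simp at h

theorem scanL_some {p : ℕ → Bool} {k n : ℕ} (h : scanL p k = some n) :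
    p n = true ∧ n < k ∧ ∀ j < n, p j = false := by
  induction k with
  | zero => simp [scanL] at h
  | succ k ih =>
    rw [scanL] at h
    rcases hh : scanL p k with _ | m
    · rw [hh] at h
      simp only [Option.orElse_eq_orElse, Option.orElse_none] at h
      cases hp : p k <;> rw [hp] at h <;> simp at h
      cases h
      exact ⟨hp, Nat.lt_succ_self _, fun j hj => scanL_none hh j hj⟩
    · rw [hh] at h
      simp only [Option.orElse_eq_orElse, Option.orElse_some] at h
      cases h
      obtain ⟨h1, h2, h3⟩ := ih hh
      exact ⟨h1, Nat.lt_succ_of_lt h2, h3⟩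

theorem scanL_isSome {p : ℕ → Bool} {k n : ℕ} (hn : n < k) (hp : p n = true) :
    ∃ m, scanL p k = some m ∧ m ≤ n := by
  rcases hh : scanL p k with _ | m
  · exact absurd hp (by simp [scanL_none hh n hn])
  · refine ⟨m, rfl, ?_⟩
    by_contra hc
    exact absurd hp (by simp [(scanL_some hh).2.2 n (by omega)])


def newElem (e m : ℕ) : Option ℕ :=
  bif WsB e (m.unpair.2 + 1) m.unpair.1 && !WsB e m.unpair.2 m.unpair.1 then
    some m.unpair.1 else none

theorem newElem_eq_some {e m x : ℕ} :
    newElem e m = some x ↔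
      m.unpair.1 = x ∧ WsB e (m.unpair.2 + 1) m.unpair.1 = true ∧
        WsB e m.unpair.2 m.unpair.1 = false := by
  unfold newElem
  rcases h1 : WsB e (m.unpair.2 + 1) m.unpair.1 <;>
    rcases h2 : WsB e m.unpair.2 m.unpair.1 <;> simp

theorem newElem_mem {e m x : ℕ} (h : newElem e m = some x) : x ∈ We' e := by
  obtain ⟨hx, h1, -⟩ := newElem_eq_some.1 h
  exact mem_We_iff.2 ⟨_, hx ▸ h1⟩

theorem newElem_exists_unique {e x : ℕ} (h : x ∈ We' e) :
    ∃ m, newElem e m = some x ∧ ∀ m', newElem e m' = some x → m' = m := by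
  obtain ⟨s, hs⟩ := mem_We_iff.1 h
  have h0 : WsB e 0 x = false := wsb_zero e x
  have hex : ∃ t, WsB e (t + 1) x = true := by
    cases s with
    | zero => exact absurd hs (by simp [h0])
    | succ s => exact ⟨s, hs⟩
  classical
  set t := Nat.find hex with htdef
  have ht : WsB e (t + 1) x = true := Nat.find_spec hex
  have htf : WsB e t x = false := by
    rcases Nat.eq_zero_or_pos t with h' | h'
    · rw [h']; exact h0
    · have hm := Nat.find_min hex (show t - 1 < t by omega)
      rw [show t - 1 + 1 = t by omega] at hm
      exact Bool.not_eq_true _ ▸ (by simpa using hm)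
  refine ⟨Nat.pair x t, ?_, ?_⟩
  · rw [newElem_eq_some]
    simp [Nat.unpair_pair, ht, htf]
  · intro m' hm'
    obtain ⟨hx, h1, h2⟩ := newElem_eq_some.1 hm'
    rw [hx] at h1 h2
    have hteq : m'.unpair.2 = t := by
      by_contra hne
      rcases Nat.lt_or_ge m'.unpair.2 t with hlt | hge
      · exact absurd (wsb_mono (t := t) h1 (by omega)) (by simp [htf])
      · exact absurd (wsb_mono (t := m'.unpair.2) ht (by omega)) (by simp [h2])
    rw [← hx, ← hteq, Nat.pair_unpair]

def reqBool (m x : ℕ) (acted : List ℕ) (n : ℕ) : Bool :=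
  WsB (n / 2) m x && decide (acted.idxOf n = acted.length)

def pick (e m : ℕ) (acted : List ℕ) : Option ℕ :=
  (newElem e m).bind fun x => scanL (reqBool m x acted) (m + 1)

def hist (e : ℕ) : ℕ → List ℕ
  | 0 => []
  | m + 1 => hist e m ++ (pick e m (hist e m)).toList

def chosen (e m : ℕ) : Option ℕ := pick e m (hist e m)

def sideOf (e m : ℕ) : ℕ := (chosen e m).elim 0 (· % 2)

def SideSet (e i : ℕ) : Set ℕ := {x | ∃ m, newElem e m = some x ∧ sideOf e m = i}

theorem notMem_iff_reqaux {acted : List ℕ} {n : ℕ} :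
    (decide (acted.idxOf n = acted.length)) = true ↔ n ∉ acted := by
  rw [decide_eq_true_eq, List.idxOf_eq_length_iff]

theorem mem_hist {e n m : ℕ} : n ∈ hist e m ↔ ∃ m' < m, chosen e m' = some n := by
  induction m with
  | zero => simp [hist]
  | succ m ih =>
    rw [hist, List.mem_append, ih]
    constructor
    · rintro (⟨m', h1, h2⟩ | h)
      · exact ⟨m', by omega, h2⟩
      · refine ⟨m, by omega, ?_⟩
        rcases hc : chosen e m with _ | c <;> rw [chosen] at hc <;> rw [hc] at h <;> simp at h
        rw [h]
    · rintro ⟨m', h1, h2⟩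
      rcases Nat.lt_succ_iff_lt_or_eq.1 h1 with h1 | rfl
      · exact Or.inl ⟨m', h1, h2⟩
      · right
        rw [chosen] at h2; rw [h2]; simp

theorem chosen_spec {e m n : ℕ} (h : chosen e m = some n) :
    ∃ x, newElem e m = some x ∧ WsB (n / 2) m x = true ∧ n ∉ hist e m ∧ n ≤ m := by
  rw [chosen, pick] at h
  rcases hne : newElem e m with _ | x <;> rw [hne] at h
  · simp at h
  · simp only [Option.bind_some] at h
    obtain ⟨h1, h2, -⟩ := scanL_some h
    rw [reqBool, Bool.and_eq_true] at h1
    exact ⟨x, rfl, h1.1, notMem_iff_reqaux.1 h1.2, by omega⟩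

theorem chosen_inj {e m m' n : ℕ} (h : chosen e m = some n) (h' : chosen e m' = some n) :
    m = m' := by
  by_contra hne
  wlog hlt : m < m' generalizing m m'
  · exact this h' h (Ne.symm hne) (by omega)
  obtain ⟨x, -, -, hmem, -⟩ := chosen_spec h'
  exact hmem (mem_hist.2 ⟨m, hlt, h⟩)

theorem chosen_qualify {e m x n : ℕ} (hne : newElem e m = some x)
    (hw : WsB (n / 2) m x = true) (hmem : n ∉ hist e m) (hnm : n ≤ m) :
    ∃ n' ≤ n, chosen e m = some n' := by
  have hp : reqBool m x (hist e m) n = true := by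
    rw [reqBool, Bool.and_eq_true]
    exact ⟨hw, notMem_iff_reqaux.2 hmem⟩
  obtain ⟨m', hm', hle⟩ := scanL_isSome (by omega : n < m + 1) hp
  refine ⟨m', hle, ?_⟩
  rw [chosen, pick, hne]
  simpa using hm'

theorem sideOf_eq {e m n : ℕ} (h : chosen e m = some n) : sideOf e m = n % 2 := by
  rw [sideOf, h]; rfl

theorem sideOf_lt_two (e m : ℕ) : sideOf e m < 2 := by
  rw [sideOf]
  rcases chosen e m with _ | n
  · simp
  · simpa using Nat.mod_lt n (show 2 > 0 by omega)

theorem sideSet_subset (e i : ℕ) : SideSet e i ⊆ We' e := by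
  rintro x ⟨m, h1, -⟩
  exact newElem_mem h1

theorem mem_union_sides {e x : ℕ} (h : x ∈ We' e) : x ∈ SideSet e 0 ∪ SideSet e 1 := by
  obtain ⟨m, hm, -⟩ := newElem_exists_unique h
  have := sideOf_lt_two e m
  interval_cases hs : sideOf e m
  · exact Or.inl ⟨m, hm, hs⟩
  · exact Or.inr ⟨m, hm, hs⟩

theorem disjoint_sides {e x : ℕ} (h0 : x ∈ SideSet e 0) (h1 : x ∈ SideSet e 1) : False := by
  obtain ⟨m0, hm0, hs0⟩ := h0
  obtain ⟨m1, hm1, hs1⟩ := h1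
  obtain ⟨m, -, huniq⟩ := newElem_exists_unique (newElem_mem hm0)
  have e0 := huniq _ hm0
  have e1 := huniq _ hm1
  rw [e0.trans e1.symm] at hs0
  omega

theorem wsb_primrec : Primrec fun p : ℕ × ℕ × ℕ => WsB p.1 p.2.1 p.2.2 :=
  Primrec.option_isSome.comp <|
    Nat.Partrec.Code.primrec_evaln.comp <|
      (((Primrec.fst.comp Primrec.snd).pair
        ((Primrec.ofNat Code).comp Primrec.fst)).pair
        (Primrec.snd.comp Primrec.snd))

theorem re_exists_bool {f : ℕ → ℕ → Bool} (hf : Computable₂ f) :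
    REPred fun x : ℕ => ∃ s, f x s = true := by
  have hr : Partrec fun x => Nat.rfind (f x : ℕ →. Bool) := Partrec.rfind hf.partrec₂
  exact hr.dom_re.of_eq fun x => by
    rw [Nat.rfind_dom]
    constructor
    · rintro ⟨n, h1, -⟩
      exact ⟨n, by simpa using h1⟩
    · rintro ⟨n, h1⟩
      exact ⟨n, by simpa using h1, fun {m} _ => trivial⟩

theorem rePred_and_bool {p : ℕ → Prop} {f : ℕ → Bool} (hp : REPred p) (hf : Computable f) :
    REPred fun x : ℕ => p x ∧ f x = true := by
  have hg : Partrec fun a : ℕ =>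
      cond (f a) (Part.assert (p a) fun _ => Part.some ()) Part.none :=
    Partrec.cond hf hp Partrec.none
  exact hg.dom_re.of_eq fun x => by
    cases hfx : f x <;> simp [hfx, Part.assert]

theorem finset_computablePred (F : Finset ℕ) : ComputablePred fun x : ℕ => x ∈ F := by
  classical
  rw [ComputablePred.computable_iff]
  refine ⟨fun x => decide (F.toList.idxOf x < F.toList.length), ?_, ?_⟩
  · exact Primrec.to_comp <|
      PrimrecPred.decide (Primrec.nat_lt.comp (Primrec.list_idxOf₁ F.toList) (Primrec.const _))
  · funext x
    rw [eq_iff_iff, decide_eq_true_eq, List.idxOf_lt_length_iff, Finset.mem_toList]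

theorem exists_We_of_re {p : ℕ → Prop} (hp : REPred p) : ∃ k : ℕ, We' k = {x | p x} := by
  have hg : Partrec fun a : ℕ =>
      (Part.assert (p a) fun _ => Part.some ()).map fun _ => (0 : ℕ) :=
    Partrec.map hp (Computable.const 0).to₂
  obtain ⟨c, hc⟩ := Nat.Partrec.Code.exists_code.1 (Partrec.nat_iff.1 hg)
  refine ⟨Encodable.encode c, ?_⟩
  ext x
  show ((Denumerable.ofNat Code (Encodable.encode c)).eval x).Dom ↔ p x
  rw [Denumerable.ofNat_encode, hc]
  simp [Part.assert]

theorem re_We (e : ℕ) : REPred fun x => x ∈ We' e :=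
  ((Nat.Partrec.Code.eval_part.comp (Computable.const (Denumerable.ofNat Code e))
    Computable.id).dom_re).of_eq fun x => Iff.rfl

theorem key {e k i : ℕ} (hi : i < 2)
    (hdisj : ∀ x, x ∈ We' k → x ∈ SideSet e i → False) :
    REPred fun x => x ∈ We' k ∧ x ∉ We' e := by
  classical
  set n := 2 * k + i with hn
  have hnever : ∀ m, chosen e m ≠ some n := by
    intro m hm
    obtain ⟨x, hne, hw, -, -⟩ := chosen_spec hm
    have hk2 : n / 2 = k := by omega
    refine hdisj x (mem_We_iff.2 ⟨m, hk2 ▸ hw⟩) ⟨m, hne, ?_⟩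
    rw [sideOf_eq hm]
    omega
  -- the c.e. set S
  set S : ℕ → Prop := fun x => ∃ s, (WsB k s x && !WsB e s x) = true with hSdef
  have hS : REPred S := by
    apply re_exists_bool
    have h1 : Primrec fun q : ℕ × ℕ => WsB k q.2 q.1 :=
      wsb_primrec.comp ((Primrec.const k).pair (Primrec.snd.pair Primrec.fst))
    have h2 : Primrec fun q : ℕ × ℕ => !(WsB e q.2 q.1) :=
      Primrec.not.comp (wsb_primrec.comp ((Primrec.const e).pair (Primrec.snd.pair Primrec.fst)))
    have hband : Primrec fun q : ℕ × ℕ => (WsB k q.2 q.1 && !WsB e q.2 q.1) :=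
      (Primrec.cond h1 h2 (Primrec.const false)).of_eq fun q => by
        cases WsB k q.2 q.1 <;> simp
    exact Primrec₂.to_comp (hband : Primrec₂ fun x s => WsB k s x && !WsB e s x)
  -- the finite exceptional set
  set T : Set ℕ := {x | S x ∧ x ∈ We' e} with hTdef
  have hTfin : T.Finite := by
    have hsub : T ⊆ (⋃ m ∈ Finset.range n, {x | newElem e m = some x}) ∪
        (⋃ n' ∈ Finset.range (n + 1), {x | ∃ m, newElem e m = some x ∧ chosen e m = some n'}) := by
      rintro x ⟨⟨s, hs⟩, hxe⟩
      rw [Bool.and_eq_true, Bool.not_eq_true'] at hs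
      obtain ⟨m, hm, -⟩ := newElem_exists_unique hxe
      obtain ⟨hx1, h1, h2⟩ := newElem_eq_some.1 hm
      rw [hx1] at h1 h2
      have hsu : s ≤ m.unpair.2 := by
        by_contra hc
        have := wsb_mono (t := s) h1 (by omega)
        rw [this] at hs
        exact absurd hs.2 (by simp)
      have hum : m.unpair.2 ≤ m := Nat.unpair_right_le m
      have hwkm : WsB k m x = true := wsb_mono hs.1 (by omega)
      rcases Nat.lt_or_ge m n with hmn | hmn
      · exact Or.inl (Set.mem_biUnion (Finset.mem_coe.2 (Finset.mem_range.2 hmn)) hm)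
      · have hnot : n ∉ hist e m := by
          intro hmem
          obtain ⟨m', -, hm'⟩ := mem_hist.1 hmem
          exact hnever m' hm'
        have hk2 : n / 2 = k := by omega
        obtain ⟨n', hn', hch⟩ := chosen_qualify hm (hk2.symm ▸ hwkm) hnot hmn
        exact Or.inr (Set.mem_biUnion (Finset.mem_coe.2 (Finset.mem_range.2 (by omega)))
          ⟨m, hm, hch⟩)
    refine Set.Finite.subset (Set.Finite.union ?_ ?_) hsub
    · refine Set.Finite.biUnion (Finset.range n).finite_toSet fun m _ => ?_
      apply Set.Subsingleton.finite
      intro a ha b hb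
      rw [Set.mem_setOf_eq] at ha hb
      exact Option.some_inj.1 (ha.symm.trans hb)
    · refine Set.Finite.biUnion (Finset.range (n + 1)).finite_toSet fun n' _ => ?_
      apply Set.Subsingleton.finite
      rintro a ⟨ma, hma, hca⟩ b ⟨mb, hmb, hcb⟩
      have hmm : ma = mb := chosen_inj hca hcb
      rw [hmm] at hma
      exact Option.some_inj.1 (hma.symm.trans hmb)
  obtain ⟨F, hF⟩ : ∃ F : Finset ℕ, (F : Set ℕ) = T := ⟨hTfin.toFinset, hTfin.coe_toFinset⟩
  have hnotF : ComputablePred fun x : ℕ => ¬ x ∈ F := (finset_computablePred F).not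
  obtain ⟨fb, hfb, hfbeq⟩ := ComputablePred.computable_iff.1 hnotF
  have hre : REPred fun x : ℕ => S x ∧ fb x = true := rePred_and_bool hS hfb
  apply hre.of_eq
  intro x
  have hxF : (fb x = true) ↔ x ∉ T := by
    have h1 := congrFun hfbeq x
    rw [← hF, ← h1]
    simp
  constructor
  · rintro ⟨hSx, hfx⟩
    obtain ⟨s, hs⟩ := hSx
    rw [Bool.and_eq_true] at hs
    refine ⟨mem_We_iff.2 ⟨s, hs.1⟩, fun hxe => ?_⟩
    exact (hxF.1 hfx) ⟨⟨s, by rw [Bool.and_eq_true]; exact hs⟩, hxe⟩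
  · rintro ⟨hxk, hxe⟩
    obtain ⟨s1, hs1⟩ := mem_We_iff.1 hxk
    have hnoe : ∀ s, WsB e s x = false := by
      intro s
      by_contra hc
      exact hxe (mem_We_iff.2 ⟨s, by simpa using hc⟩)
    refine ⟨⟨s1, by rw [Bool.and_eq_true, Bool.not_eq_true']; exact ⟨hs1, hnoe s1⟩⟩, ?_⟩
    exact hxF.2 fun hT => hxe hT.2

theorem not_computable_side {e i : ℕ} (hi : i < 2)
    (he : ¬ ComputablePred (· ∈ We' e)) : ¬ ComputablePred (· ∈ SideSet e i) := by
  intro hcomp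
  have hcompl : REPred fun x => ¬ x ∈ SideSet e i := (hcomp.not).to_re
  obtain ⟨k, hk⟩ := exists_We_of_re hcompl
  have hdisj : ∀ x, x ∈ We' k → x ∈ SideSet e i → False := by
    intro x hxk hxi
    rw [hk] at hxk
    exact hxk hxi
  have hre := key hi hdisj
  have hco : REPred fun x => ¬ x ∈ We' e := by
    apply hre.of_eq
    intro x
    constructor
    · exact fun h => h.2
    · intro h
      refine ⟨?_, h⟩
      rw [hk]
      exact fun hxi => h (sideSet_subset e i hxi)
  exact he (ComputablePred.computable_iff_re_compl_re'.2 ⟨re_We e, hco⟩)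

/-! ### Computability of the construction -/

theorem scanL_primrec {α : Type*} [Primcodable α] {p : α → ℕ → Bool} (hp : Primrec₂ p) :
    Primrec₂ fun a k => scanL (p a) k := by
  have hg : Primrec₂ fun a (q : ℕ × Option ℕ) =>
      (q.2 <|> (bif p a q.1 then some q.1 else none)) := by
    have hcond : Primrec fun v : α × (ℕ × Option ℕ) =>
        (bif p v.1 v.2.1 then some v.2.1 else none : Option ℕ) :=
      Primrec.cond (hp.comp Primrec.fst (Primrec.fst.comp Primrec.snd))
        (Primrec.option_some.comp (Primrec.fst.comp Primrec.snd)) (Primrec.const none)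
    exact (Primrec.option_orElse.comp (Primrec.snd.comp Primrec.snd) hcond).to₂
  have H := Primrec.nat_rec (Primrec.const (none : Option ℕ)) hg
  apply H.of_eq
  intro a k
  induction k with
  | zero => rfl
  | succ k ih => rw [scanL, ← ih]

theorem newElem_primrec : Primrec₂ newElem := by
  have h1 : Primrec fun q : ℕ × ℕ => WsB q.1 (q.2.unpair.2 + 1) q.2.unpair.1 :=
    wsb_primrec.comp (Primrec.fst.pair
      (((Primrec.succ.comp (Primrec.snd.comp (Primrec.unpair.comp Primrec.snd)))).pair
        (Primrec.fst.comp (Primrec.unpair.comp Primrec.snd))))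
  have h2 : Primrec fun q : ℕ × ℕ => !WsB q.1 q.2.unpair.2 q.2.unpair.1 :=
    Primrec.not.comp (wsb_primrec.comp (Primrec.fst.pair
      ((Primrec.snd.comp (Primrec.unpair.comp Primrec.snd)).pair
        (Primrec.fst.comp (Primrec.unpair.comp Primrec.snd)))))
  have hband : Primrec fun q : ℕ × ℕ =>
      (WsB q.1 (q.2.unpair.2 + 1) q.2.unpair.1 && !WsB q.1 q.2.unpair.2 q.2.unpair.1) :=
    (Primrec.cond h1 h2 (Primrec.const false)).of_eq fun q => by
      cases WsB q.1 (q.2.unpair.2 + 1) q.2.unpair.1 <;> simp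
  exact (Primrec.cond hband
    (Primrec.option_some.comp (Primrec.fst.comp (Primrec.unpair.comp Primrec.snd)))
    (Primrec.const none)).to₂

theorem reqBool_primrec :
    Primrec₂ fun (u : (ℕ × ℕ) × List ℕ) (n : ℕ) => reqBool u.1.1 u.1.2 u.2 n := by
  have h1 : Primrec fun v : ((ℕ × ℕ) × List ℕ) × ℕ => WsB (v.2 / 2) v.1.1.1 v.1.1.2 :=
    wsb_primrec.comp (((Primrec.nat_div.comp Primrec.snd (Primrec.const 2))).pair
      ((Primrec.fst.comp (Primrec.fst.comp Primrec.fst)).pair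
        (Primrec.snd.comp (Primrec.fst.comp Primrec.fst))))
  have h2 : Primrec fun v : ((ℕ × ℕ) × List ℕ) × ℕ =>
      decide (v.1.2.idxOf v.2 = v.1.2.length) :=
    PrimrecPred.decide <| Primrec.eq.comp
      (Primrec.list_idxOf.comp Primrec.snd (Primrec.snd.comp Primrec.fst))
      (Primrec.list_length.comp (Primrec.snd.comp Primrec.fst))
  have hmain : Primrec fun v : ((ℕ × ℕ) × List ℕ) × ℕ =>
      reqBool v.1.1.1 v.1.1.2 v.1.2 v.2 :=
    (Primrec.cond h1 h2 (Primrec.const false)).of_eq fun v => by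
      cases h : WsB (v.2 / 2) v.1.1.1 v.1.1.2 <;> simp [reqBool, h]
  exact hmain.to₂

set_option maxHeartbeats 1000000 in
theorem pick_primrec : Primrec fun t : (ℕ × ℕ) × List ℕ => pick t.1.1 t.1.2 t.2 := by
  have hsc := scanL_primrec reqBool_primrec
  have hinner : Primrec₂ fun (t : (ℕ × ℕ) × List ℕ) (x : ℕ) =>
      scanL (reqBool t.1.2 x t.2) (t.1.2 + 1) := by
    have hproj : Primrec fun v : ((ℕ × ℕ) × List ℕ) × ℕ =>
        (((v.1.1.2, v.2), v.1.2) : (ℕ × ℕ) × List ℕ) :=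
      ((Primrec.snd.comp (Primrec.fst.comp Primrec.fst)).pair Primrec.snd).pair
        (Primrec.snd.comp Primrec.fst)
    have hsucc : Primrec fun v : ((ℕ × ℕ) × List ℕ) × ℕ => v.1.1.2 + 1 :=
      Primrec.succ.comp (Primrec.snd.comp (Primrec.fst.comp Primrec.fst))
    exact (hsc.comp hproj hsucc).to₂
  exact Primrec.option_bind
    (newElem_primrec.comp (Primrec.fst.comp Primrec.fst) (Primrec.snd.comp Primrec.fst))
    hinner

theorem option_toList_primrec : Primrec fun o : Option ℕ => o.toList := by
  have := Primrec.option_casesOn (o := fun o : Option ℕ => o)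
    (f := fun _ : Option ℕ => ([] : List ℕ))
    (g := fun (_ : Option ℕ) (b : ℕ) => [b]) Primrec.id (Primrec.const [])
    ((Primrec.list_cons.comp Primrec.snd (Primrec.const [])).to₂)
  apply this.of_eq
  intro o
  cases o <;> rfl

set_option maxHeartbeats 1000000 in
theorem hist_primrec : Primrec₂ hist := by
  have hg : Primrec₂ fun e (q : ℕ × List ℕ) => q.2 ++ (pick e q.1 q.2).toList := by
    have hp : Primrec fun v : ℕ × (ℕ × List ℕ) => pick v.1 v.2.1 v.2.2 :=
      pick_primrec.comp ((Primrec.fst.pair (Primrec.fst.comp Primrec.snd)).pair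
        (Primrec.snd.comp Primrec.snd))
    exact (Primrec.list_append.comp (Primrec.snd.comp Primrec.snd)
      (option_toList_primrec.comp hp)).to₂
  have H := Primrec.nat_rec (Primrec.const ([] : List ℕ)) hg
  apply H.of_eq
  intro e m
  induction m with
  | zero => rfl
  | succ m ih => rw [hist, ← ih]

set_option maxHeartbeats 1000000 in
theorem chosen_primrec : Primrec₂ chosen := by
  have : Primrec fun q : ℕ × ℕ => pick q.1 q.2 (hist q.1 q.2) :=
    pick_primrec.comp (Primrec.id.pair hist_primrec)
  exact this.to₂

set_option maxHeartbeats 1000000 in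
theorem sideOf_primrec : Primrec₂ sideOf := by
  have h := Primrec.option_casesOn (o := fun q : ℕ × ℕ => chosen q.1 q.2)
    (f := fun _ : ℕ × ℕ => (0 : ℕ))
    (g := fun (_ : ℕ × ℕ) (n : ℕ) => n % 2) chosen_primrec (Primrec.const 0)
    ((Primrec.nat_mod.comp Primrec.snd (Primrec.const 2)).to₂)
  have h2 : Primrec fun q : ℕ × ℕ => sideOf q.1 q.2 := h.of_eq fun q => by
    rcases hh : chosen q.1 q.2 with _ | n <;> simp [sideOf, hh]
  exact h2

set_option maxHeartbeats 1000000 in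
theorem exists_side_code (i : ℕ) :
    ∃ c : Code, ∀ e, We' (Encodable.encode (c.curry e)) = SideSet e i := by
  have hbool : Computable₂ fun (p : ℕ) (m : ℕ) =>
      (decide (newElem p.unpair.1 m = some p.unpair.2) && decide (sideOf p.unpair.1 m = i)) := by
    have h1 : Primrec fun v : ℕ × ℕ => decide (newElem v.1.unpair.1 v.2 = some v.1.unpair.2) :=
      PrimrecPred.decide <| Primrec.eq.comp
        (newElem_primrec.comp (Primrec.fst.comp (Primrec.unpair.comp Primrec.fst)) Primrec.snd)
        (Primrec.option_some.comp (Primrec.snd.comp (Primrec.unpair.comp Primrec.fst)))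
    have h2 : Primrec fun v : ℕ × ℕ => decide (sideOf v.1.unpair.1 v.2 = i) :=
      PrimrecPred.decide <| Primrec.eq.comp
        (sideOf_primrec.comp (Primrec.fst.comp (Primrec.unpair.comp Primrec.fst)) Primrec.snd)
        (Primrec.const i)
    have hmain : Primrec fun v : ℕ × ℕ =>
        (decide (newElem v.1.unpair.1 v.2 = some v.1.unpair.2) &&
          decide (sideOf v.1.unpair.1 v.2 = i)) :=
      (Primrec.cond h1 h2 (Primrec.const false)).of_eq fun v => by
        cases h : decide (newElem v.1.unpair.1 v.2 = some v.1.unpair.2) <;> simp [h]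
    exact Primrec₂.to_comp hmain.to₂
  have hF : Partrec fun p : ℕ => Nat.rfind
      ((fun m => (decide (newElem p.unpair.1 m = some p.unpair.2) &&
        decide (sideOf p.unpair.1 m = i))) : ℕ →. Bool) :=
    Partrec.rfind hbool.partrec₂
  obtain ⟨c, hc⟩ := Nat.Partrec.Code.exists_code.1 (Partrec.nat_iff.1 hF)
  refine ⟨c, fun e => ?_⟩
  ext x
  show ((Denumerable.ofNat Code (Encodable.encode (c.curry e))).eval x).Dom ↔ _
  rw [Denumerable.ofNat_encode, Nat.Partrec.Code.eval_curry, hc]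
  refine Nat.rfind_dom.trans ?_
  constructor
  · rintro ⟨m, hm, -⟩
    simp only [Part.coe_some, Part.mem_some_iff] at hm
    rw [eq_comm, Bool.and_eq_true, decide_eq_true_eq, decide_eq_true_eq] at hm
    exact ⟨m, by simpa [Nat.unpair_pair] using hm.1, by simpa [Nat.unpair_pair] using hm.2⟩
  · rintro ⟨m, h1, h2⟩
    refine ⟨m, ?_, fun {q} _ => trivial⟩
    simp only [Part.coe_some, Part.mem_some_iff]
    rw [eq_comm, Bool.and_eq_true, decide_eq_true_eq, decide_eq_true_eq, Nat.unpair_pair]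
    exact ⟨h1, h2⟩

/-! ### transfer helpers -/

theorem rePred_comp {α β : Type*} [Primcodable α] [Primcodable β] {p : β → Prop}
    (hp : REPred p) {f : α → β} (hf : Computable f) : REPred fun a => p (f a) :=
  hp.comp hf

theorem computablePred_comp {α β : Type*} [Primcodable α] [Primcodable β] {p : β → Prop}
    (hp : ComputablePred p) {f : α → β} (hf : Computable f) :
    ComputablePred fun a => p (f a) := by
  obtain ⟨g, hg, hgeq⟩ := ComputablePred.computable_iff.1 hp
  refine ComputablePred.computable_iff.2 ⟨fun a => g (f a), hg.comp hf, ?_⟩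
  funext a
  exact congrFun hgeq (f a)

/-! ### the special set and its bad split -/

def Kset : Set ℕ := {x | ((Denumerable.ofNat Code x).eval 0).Dom}

theorem Kset_re : REPred (· ∈ Kset) :=
  rePred_comp (ComputablePred.halting_problem_re 0) (Computable.ofNat Code)

theorem Kset_not_computable : ¬ ComputablePred (· ∈ Kset) := by
  intro h
  apply ComputablePred.halting_problem 0
  have := computablePred_comp h (Computable.encode (α := Code))
  apply this.of_eq
  intro c
  show Encodable.encode c ∈ Kset ↔ _
  rw [Kset, Set.mem_setOf_eq, Denumerable.ofNat_encode]

def Aset : Set ℕ := {y | y / 2 ∈ Kset}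
def A0set : Set ℕ := {y | y % 2 = 0 ∧ y / 2 ∈ Kset}
def A1set : Set ℕ := {y | y % 2 = 1 ∧ y / 2 ∈ Kset}
def Wset : Set ℕ := {y | y % 2 = 0}

theorem Aset_re : REPred (· ∈ Aset) :=
  rePred_comp Kset_re (Primrec.to_comp (Primrec.nat_div.comp Primrec.id (Primrec.const 2)))

theorem parity_re {b : ℕ} (hb : b < 2) : REPred fun y : ℕ => y % 2 = b ∧ y / 2 ∈ Kset := by
  have h := rePred_and_bool (p := fun y : ℕ => y / 2 ∈ Kset) (f := fun y => decide (y % 2 = b))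
    Aset_re
    (Primrec.to_comp (PrimrecPred.decide <| Primrec.eq.comp (Primrec.nat_mod.comp Primrec.id (Primrec.const 2))
      (Primrec.const b)))
  apply h.of_eq
  intro y
  rw [decide_eq_true_eq]
  exact and_comm

theorem A0set_re : REPred (· ∈ A0set) := parity_re (by omega)
theorem A1set_re : REPred (· ∈ A1set) := parity_re (by omega)

theorem A0set_not_computable : ¬ ComputablePred (· ∈ A0set) := by
  intro h
  apply Kset_not_computable
  have := computablePred_comp h
    (Primrec.to_comp (Primrec.nat_mul.comp (Primrec.const 2) Primrec.id))
  apply this.of_eq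
  intro x
  show 2 * x ∈ A0set ↔ x ∈ Kset
  rw [A0set, Set.mem_setOf_eq]
  constructor
  · rintro ⟨-, h2⟩
    rwa [show 2 * x / 2 = x by omega] at h2
  · intro hx
    exact ⟨by omega, by rwa [show 2 * x / 2 = x by omega]⟩

theorem A1set_not_computable : ¬ ComputablePred (· ∈ A1set) := by
  intro h
  apply Kset_not_computable
  have := computablePred_comp h
    (Primrec.to_comp (Primrec.succ.comp (Primrec.nat_mul.comp (Primrec.const 2) Primrec.id)))
  apply this.of_eq
  intro x
  show 2 * x + 1 ∈ A1set ↔ x ∈ Kset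
  rw [A1set, Set.mem_setOf_eq]
  constructor
  · rintro ⟨-, h2⟩
    rwa [show (2 * x + 1) / 2 = x by omega] at h2
  · intro hx
    exact ⟨by omega, by rwa [show (2 * x + 1) / 2 = x by omega]⟩

theorem Wset_computable : ComputablePred (· ∈ Wset) := by
  refine ComputablePred.computable_iff.2 ⟨fun y => decide (y % 2 = 0), ?_, ?_⟩
  · exact Primrec.to_comp (PrimrecPred.decide <| Primrec.eq.comp (Primrec.nat_mod.comp Primrec.id (Primrec.const 2))
      (Primrec.const 0))
  · funext y
    rw [eq_iff_iff, decide_eq_true_eq]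
    exact Iff.rfl

theorem WdiffA_not_re : ¬ REPred (· ∈ Wset \ Aset) := by
  intro h
  apply Kset_not_computable
  refine ComputablePred.computable_iff_re_compl_re'.2 ⟨Kset_re, ?_⟩
  have := rePred_comp h (Primrec.to_comp (Primrec.nat_mul.comp (Primrec.const 2) Primrec.id))
  apply this.of_eq
  intro x
  show 2 * x ∈ Wset \ Aset ↔ ¬ x ∈ Kset
  rw [Set.mem_diff, Wset, Aset, Set.mem_setOf_eq, Set.mem_setOf_eq,
    show 2 * x / 2 = x by omega]
  constructor
  · exact fun hh => hh.2
  · exact fun hh => ⟨by omega, hh⟩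

theorem WdiffA1_eq : Wset \ A1set = Wset := by
  ext y
  rw [Set.mem_diff, A1set, Wset, Set.mem_setOf_eq, Set.mem_setOf_eq]
  constructor
  · exact fun h => h.1
  · intro h
    exact ⟨h, fun hc => by omega⟩

theorem A0_union_A1 : A0set ∪ A1set = Aset := by
  ext y
  rw [Set.mem_union, A0set, A1set, Aset, Set.mem_setOf_eq, Set.mem_setOf_eq, Set.mem_setOf_eq]
  constructor
  · rintro (⟨-, h⟩ | ⟨-, h⟩) <;> exact h
  · intro h
    rcases Nat.mod_two_eq_zero_or_one y with h2 | h2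
    · exact Or.inl ⟨h2, h⟩
    · exact Or.inr ⟨h2, h⟩

theorem A0_disj_A1 : Disjoint A0set A1set := by
  rw [Set.disjoint_left]
  rintro y ⟨h1, -⟩ ⟨h2, -⟩
  omega

/-! ### padding -/

def idc : Code := Code.pair Code.left Code.right

theorem eval_idc (n : ℕ) : idc.eval n = Part.some n := by
  rw [idc]
  simp [Nat.Partrec.Code.eval, Seq.seq, Nat.pair_unpair]

theorem eval_comp_idc (c : Code) (n : ℕ) : (c.comp idc).eval n = c.eval n := by
  have h : (c.comp idc).eval n = idc.eval n >>= c.eval := rfl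
  rw [h, eval_idc]
  exact Part.bind_some _ c.eval

def padf : ℕ → ℕ := fun k => Encodable.encode ((Denumerable.ofNat Code k).comp idc)

theorem padf_gt (k : ℕ) : k < padf k := by
  have h := (Nat.Partrec.Code.encode_lt_comp (Denumerable.ofNat Code k) idc).1
  rwa [Denumerable.encode_ofNat] at h

theorem We'_padf (k : ℕ) : We' (padf k) = We' k := by
  ext x
  show ((Denumerable.ofNat Code (Encodable.encode _)).eval x).Dom ↔ _
  rw [Denumerable.ofNat_encode, eval_comp_idc]
  exact Iff.rfl

theorem padf_primrec : Primrec padf :=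
  Primrec.encode.comp
    (Nat.Partrec.Code.primrec₂_comp.comp (Primrec.ofNat Code) (Primrec.const idc))

theorem iterf_strictMono (k0 : ℕ) : StrictMono fun m => padf^[m] k0 :=
  strictMono_nat_of_lt_succ fun n => by
    rw [Function.iterate_succ_apply']
    exact padf_gt _

theorem We'_iterf (k0 : ℕ) : ∀ m, We' (padf^[m] k0) = We' k0 := by
  intro m
  induction m with
  | zero => rfl
  | succ m ih => rw [Function.iterate_succ_apply', We'_padf, ih]

theorem mem_rangeI_iff {k0 x : ℕ} :
    x ∈ Set.range (fun m => padf^[m] k0) ↔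
      (scanL (fun m => decide (padf^[m] k0 = x)) (x + 1)).isSome = true := by
  constructor
  · rintro ⟨m, rfl⟩
    have hm : m ≤ padf^[m] k0 := (iterf_strictMono k0).le_apply
    obtain ⟨n, hn, -⟩ := scanL_isSome (p := fun m' => decide (padf^[m'] k0 = padf^[m] k0))
      (k := padf^[m] k0 + 1) (n := m) (by omega) (by simp)
    rw [hn]
    rfl
  · intro h
    obtain ⟨n, hn⟩ := Option.isSome_iff_exists.1 h
    obtain ⟨h1, -, -⟩ := scanL_some hn
    exact ⟨n, of_decide_eq_true h1⟩

theorem rangeI_computable (k0 : ℕ) :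
    ComputablePred (· ∈ Set.range (fun m => padf^[m] k0)) := by
  have hiter : Primrec fun q : ℕ × ℕ => padf^[q.2] k0 :=
    Primrec.nat_iterate Primrec.snd (Primrec.const k0) (padf_primrec.comp Primrec.snd).to₂
  have hp : Primrec₂ fun (x m : ℕ) => decide (padf^[m] k0 = x) :=
    (Primrec.eq.comp (hiter.comp (Primrec.pair Primrec.snd Primrec.snd))
      Primrec.fst).decide.to₂
  have hb : Primrec fun x : ℕ =>
      (scanL (fun m => decide (padf^[m] k0 = x)) (x + 1)).isSome :=
    Primrec.option_isSome.comp ((scanL_primrec hp).comp Primrec.id Primrec.succ)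
  refine ComputablePred.computable_iff.2 ⟨_, hb.to_comp, ?_⟩
  funext x
  rw [eq_iff_iff]
  exact mem_rangeI_iff

end FSplit


open Nat.Partrec (Code)

/-- There is a splitting procedure `h`, a c.e. set `A` with a non-trivial
non-Friedberg split, and an infinite computable set `I` of indices of `A` on
which `h` gives a non-trivial non-Friedberg split of `A`. -/
theorem splitting_procedure_correct_on_infinitely_many :
    ∃ (h : ℕ → ℕ × ℕ) (A : Set ℕ) (I : Set ℕ),
      SplittingProcedure h ∧ Ce A ∧
      (∃ A₀ A₁ : Set ℕ, IsSplit A A₀ A₁ ∧ ¬ CompSet A₀ ∧ ¬ CompSet A₁ ∧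
        ∃ W : Set ℕ, Ce W ∧ ¬ Ce (W \ A) ∧ (Ce (W \ A₀) ∨ Ce (W \ A₁))) ∧
      I.Infinite ∧ CompSet I ∧ (∀ e ∈ I, We e = A) ∧
      ∀ e ∈ I,
        ¬ CompSet (We (h e).1) ∧ ¬ CompSet (We (h e).2) ∧
        ∃ W : Set ℕ, Ce W ∧ ¬ Ce (W \ A) ∧
          (Ce (W \ We (h e).1) ∨ Ce (W \ We (h e).2)) := by
  classical
  obtain ⟨kA, hkA⟩ := FSplit.exists_We_of_re FSplit.Aset_re
  obtain ⟨k0, hk0⟩ := FSplit.exists_We_of_re FSplit.A0set_re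
  obtain ⟨k1, hk1⟩ := FSplit.exists_We_of_re FSplit.A1set_re
  obtain ⟨c0, hc0⟩ := FSplit.exists_side_code 0
  obtain ⟨c1, hc1⟩ := FSplit.exists_side_code 1
  have hWW : We = FSplit.We' := rfl
  have hkA' : FSplit.We' kA = FSplit.Aset := by rw [hkA]; exact Set.setOf_mem_eq
  have hk0' : FSplit.We' k0 = FSplit.A0set := by rw [hk0]; exact Set.setOf_mem_eq
  have hk1' : FSplit.We' k1 = FSplit.A1set := by rw [hk1]; exact Set.setOf_mem_eq
  set f : ℕ → ℕ := fun m => FSplit.padf^[m] kA with hfdef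
  set I : Set ℕ := Set.range f with hIdef
  have hIb : ∀ e : ℕ,
      ((FSplit.scanL (fun m => decide (f m = e)) (e + 1)).isSome = true) ↔ e ∈ I :=
    fun e => Iff.symm (FSplit.mem_rangeI_iff (k0 := kA) (x := e))
  have hWef : ∀ m, We (f m) = FSplit.Aset := by
    intro m
    rw [hWW]
    exact (FSplit.We'_iterf kA m).trans hkA'
  refine ⟨fun e => bif (FSplit.scanL (fun m => decide (f m = e)) (e + 1)).isSome then (k0, k1)
      else (Encodable.encode (c0.curry e), Encodable.encode (c1.curry e)),
    FSplit.Aset, I, ⟨?_, ?_⟩, FSplit.Aset_re, ?_, ?_, ?_, ?_, ?_⟩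
  · -- Computable h
    have hiter : Primrec fun q : ℕ × ℕ => FSplit.padf^[q.2] kA :=
      Primrec.nat_iterate Primrec.snd (Primrec.const kA)
        (FSplit.padf_primrec.comp Primrec.snd).to₂
    have hp : Primrec₂ fun (x m : ℕ) => decide (f m = x) :=
      (Primrec.eq.comp (hiter.comp (Primrec.pair Primrec.snd Primrec.snd))
        Primrec.fst).decide.to₂
    have hb : Primrec fun e : ℕ =>
        (FSplit.scanL (fun m => decide (f m = e)) (e + 1)).isSome :=
      Primrec.option_isSome.comp ((FSplit.scanL_primrec hp).comp Primrec.id Primrec.succ)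
    have hcur0 : Computable fun e : ℕ => Encodable.encode (c0.curry e) :=
      Primrec.to_comp (Primrec.encode.comp
        (Nat.Partrec.Code.primrec₂_curry.comp (Primrec.const c0) Primrec.id))
    have hcur1 : Computable fun e : ℕ => Encodable.encode (c1.curry e) :=
      Primrec.to_comp (Primrec.encode.comp
        (Nat.Partrec.Code.primrec₂_curry.comp (Primrec.const c1) Primrec.id))
    exact Computable.cond hb.to_comp (Computable.const (k0, k1)) (hcur0.pair hcur1)
  · -- split conditions for every e
    intro e
    cases hX : (FSplit.scanL (fun m => decide (f m = e)) (e + 1)).isSome with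
    | true =>
      obtain ⟨m, rfl⟩ : e ∈ I := (hIb e).1 hX
      simp only [hX, cond_true]
      refine ⟨?_, ?_, ?_⟩
      · show Disjoint (We k0) (We k1)
        rw [hWW, hk0', hk1']
        exact FSplit.A0_disj_A1
      · show We k0 ∪ We k1 = We (f m)
        rw [hWW, hk0', hk1', ← hWW, hWef m]
        exact FSplit.A0_union_A1
      · intro _
        constructor
        · show ¬ CompSet (We k0)
          rw [hWW, hk0']
          exact FSplit.A0set_not_computable
        · show ¬ CompSet (We k1)
          rw [hWW, hk1']
          exact FSplit.A1set_not_computable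
    | false =>
      simp only [hX, cond_false]
      have h0 : We (Encodable.encode (c0.curry e)) = FSplit.SideSet e 0 := by
        rw [hWW]; exact hc0 e
      have h1 : We (Encodable.encode (c1.curry e)) = FSplit.SideSet e 1 := by
        rw [hWW]; exact hc1 e
      refine ⟨?_, ?_, ?_⟩
      · show Disjoint (We (Encodable.encode (c0.curry e))) (We (Encodable.encode (c1.curry e)))
        rw [h0, h1]
        exact Set.disjoint_left.2 fun {x} hx0 hx1 => FSplit.disjoint_sides hx0 hx1
      · show We (Encodable.encode (c0.curry e)) ∪ We (Encodable.encode (c1.curry e)) = We e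
        rw [h0, h1]
        apply Set.Subset.antisymm
        · exact Set.union_subset (FSplit.sideSet_subset e 0) (FSplit.sideSet_subset e 1)
        · intro x hx
          exact FSplit.mem_union_sides hx
      · intro hne
        constructor
        · show ¬ CompSet (We (Encodable.encode (c0.curry e)))
          rw [h0]
          exact FSplit.not_computable_side (by omega) hne
        · show ¬ CompSet (We (Encodable.encode (c1.curry e)))
          rw [h1]
          exact FSplit.not_computable_side (by omega) hne
  · -- the non-Friedberg nontrivial split of A
    refine ⟨FSplit.A0set, FSplit.A1set,
      ⟨FSplit.A0set_re, FSplit.A1set_re, FSplit.A0_disj_A1, FSplit.A0_union_A1⟩,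
      FSplit.A0set_not_computable, FSplit.A1set_not_computable,
      FSplit.Wset, FSplit.Wset_computable.to_re, FSplit.WdiffA_not_re, Or.inr ?_⟩
    show Ce (FSplit.Wset \ FSplit.A1set)
    rw [FSplit.WdiffA1_eq]
    exact FSplit.Wset_computable.to_re
  · exact Set.infinite_range_of_injective (FSplit.iterf_strictMono kA).injective
  · exact FSplit.rangeI_computable kA
  · rintro e ⟨m, rfl⟩
    exact hWef m
  · intro e he
    have hX : (FSplit.scanL (fun m => decide (f m = e)) (e + 1)).isSome = true := (hIb e).2 he
    simp only [hX, cond_true]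
    refine ⟨?_, ?_, FSplit.Wset, FSplit.Wset_computable.to_re, FSplit.WdiffA_not_re, Or.inr ?_⟩
    · show ¬ CompSet (We k0)
      rw [hWW, hk0']
      exact FSplit.A0set_not_computable
    · show ¬ CompSet (We k1)
      rw [hWW, hk1']
      exact FSplit.A1set_not_computable
    · show Ce (FSplit.Wset \ We k1)
      rw [hWW, hk1', FSplit.WdiffA1_eq]
      exact FSplit.Wset_computable.to_re
end

section
/- (Downey–Stob) Let A be a maximal set. Then every non-trivial split of A is a Friedberg split: whenever A₀, A₁ are disjoint c.e. sets with A₀ ∪ A₁ = A and neither A₀ nor A₁ computable, then for every c.e. set W with W \ A not c.e., neither W \ A₀ nor W \ A₁ is c.e. -/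
/-- A c.e. set `A` is maximal if its complement is infinite and every c.e.
superset `W` of `A` satisfies `W \\ A` finite or `Wᶜ` finite. -/
def MaximalSet (A : Set ℕ) : Prop :=
  Ce A ∧ Aᶜ.Infinite ∧
    ∀ W : Set ℕ, Ce W → A ⊆ W → (W \ A).Finite ∨ Wᶜ.Finite

/-- r.e. predicates are closed under disjunction. -/
theorem RePred.or' {α} [Primcodable α] {p q : α → Prop} (hp : REPred p) (hq : REPred q) :
    REPred fun a => p a ∨ q a := by
  obtain ⟨k, hk, H⟩ := Partrec.merge' hp hq
  refine (hk.dom_re).of_eq fun a => ?_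
  rw [(H a).2]
  simp [Part.assert]

theorem Ce.union {A B : Set ℕ} (hA : Ce A) (hB : Ce B) : Ce (A ∪ B) := by
  have := RePred.or' hA hB
  exact this.of_eq fun a => by simp [Set.mem_union]

theorem computablePred_mem_list (l : List ℕ) : ComputablePred fun x => x ∈ l := by
  induction l with
  | nil =>
    exact ComputablePred.computable_iff.2 ⟨fun _ => false, Computable.const _, by simp⟩
  | cons a l ih =>
    obtain ⟨f, hf, hfe⟩ := ComputablePred.computable_iff.1 ih
    refine ComputablePred.computable_iff.2
      ⟨fun x => (decide (x = a)) || f x, ?_, ?_⟩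
    · have h1 : Computable fun x : ℕ => decide (x = a) :=
        (Primrec.eq.comp Primrec.id (Primrec.const a)).decide.to_comp
      exact (Computable.cond h1 (Computable.const true) hf).of_eq fun x => by
        cases decide (x = a) <;> simp
    · funext x
      have hfx : (x ∈ l) = ((f x : Prop)) := congrFun hfe x
      rw [eq_iff_iff]
      simp [List.mem_cons, hfx]

theorem CompSet.of_finite {S : Set ℕ} (hS : S.Finite) : CompSet S := by
  obtain ⟨l, hl⟩ : ∃ l : List ℕ, ∀ x, x ∈ S ↔ x ∈ l :=
    ⟨hS.toFinset.toList, fun x => by simp⟩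
  exact (computablePred_mem_list l).of_eq fun x => (hl x).symm

theorem Ce.of_finite {S : Set ℕ} (hS : S.Finite) : Ce S :=
  (CompSet.of_finite hS).to_re

/-- Key step: if `W \ A₀` were c.e., then `A₀` would be computable or `W \ A` c.e. -/
theorem key_step (A A₀ A₁ W : Set ℕ) (hA : MaximalSet A)
    (hA0 : Ce A₀) (hA1 : Ce A₁) (hdisj : Disjoint A₀ A₁) (hunion : A₀ ∪ A₁ = A)
    (h0 : ¬ CompSet A₀) (hW : Ce W) (hWA : ¬ Ce (W \ A)) : ¬ Ce (W \ A₀) := by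
  intro hre
  have hAce : Ce A := hA.1
  have hZce : Ce (A ∪ W) := hAce.union hW
  rcases hA.2.2 (A ∪ W) hZce Set.subset_union_left with hfin | hcof
  · -- (A ∪ W) \ A = W \ A is finite, hence c.e.
    apply hWA
    have : ((A ∪ W) \ A) = W \ A := by
      ext x
      simp only [Set.mem_diff, Set.mem_union, Set.mem_setOf_eq]
      tauto
    exact Ce.of_finite (this ▸ hfin)
  · -- complement of A ∪ W is finite; then A₀ᶜ = A₁ ∪ (W \ A₀) ∪ (A ∪ W)ᶜ is c.e.
    have hcompl : Ce (A₁ ∪ ((W \ A₀) ∪ (A ∪ W)ᶜ)) :=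
      hA1.union (hre.union (Ce.of_finite hcof))
    apply h0
    rw [CompSet, ComputablePred.computable_iff_re_compl_re']
    refine ⟨hA0, ?_⟩
    refine hcompl.of_eq fun x => ?_
    simp only [Set.mem_union, Set.mem_diff, Set.mem_compl_iff, Set.mem_union]
    constructor
    · rintro (h1 | ⟨hw, h0'⟩ | h)
      · exact fun hx0 => hdisj.le_bot ⟨hx0, h1⟩
      · exact h0'
      · intro hx0
        exact (not_or.1 h).1 (hunion ▸ Or.inl hx0)
    · intro hx0
      by_cases hxA : x ∈ A
      · left
        rcases (hunion ▸ hxA : x ∈ A₀ ∪ A₁) with h | h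
        · exact absurd h hx0
        · exact h
      · by_cases hxW : x ∈ W
        · exact Or.inr (Or.inl ⟨hxW, hx0⟩)
        · exact Or.inr (Or.inr (not_or.2 ⟨hxA, hxW⟩))

/-- (Downey–Stob) Every non-trivial split of a maximal set is a Friedberg
split. -/
theorem maximal_nontrivial_splits_friedberg (A : Set ℕ) (hA : MaximalSet A)
    (A₀ A₁ : Set ℕ) (hsplit : IsSplit A A₀ A₁)
    (h0 : ¬ CompSet A₀) (h1 : ¬ CompSet A₁) :
    ∀ W : Set ℕ, Ce W → ¬ Ce (W \ A) → ¬ Ce (W \ A₀) ∧ ¬ Ce (W \ A₁) := by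
  obtain ⟨hA0, hA1, hdisj, hunion⟩ := hsplit
  intro W hW hWA
  constructor
  · exact key_step A A₀ A₁ W hA hA0 hA1 hdisj hunion h0 hW hWA
  · exact key_step A A₁ A₀ W hA hA1 hA0 hdisj.symm
      (by rw [Set.union_comm]; exact hunion) h1 hW hWA
end
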